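/- (Theorem 3.6.) If the Weyl projective curvature tensor vanishes, i.e. P(X,Y)Z = 0 for all X, Y, Z ∈ V, then Ric(X,Y) = −2n(α₀² + β₀²)g(X,Y) for all X, Y ∈ V (the manifold is Einstein). -/

import Mathlib

/-- The Ricci tensor: `Ric R Y Z` is the trace of the linear map `X ↦ R X Y Z`. -/
noncomputable def Ric {V : Type*} [AddCommGroup V] [Module ℝ V]
    (R : V →ₗ[ℝ] V →ₗ[ℝ] V →ₗ[ℝ] V) (Y Z : V) : ℝ :=
  LinearMap.trace ℝ V ((LinearMap.applyₗ Z).comp (R.flip Y))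

/-!
Vanishing of the projective curvature means `R(X,Y)Z = c (Ric(Y,Z) X - Ric(X,Z) Y)` with
`c = 1/(2n)`. Feeding this shape into the antisymmetry of `g(R(X,Y)Z, W)` in `(Z, W)` and into
pair symmetry forces `Ric = Ric(ξ,ξ) g`; here the metric has to be tested on two vectors of
`ker η` that are not `g`-orthogonal, which exist since `g` is nondegenerate and `dim V ≥ 2`.
Comparing with the trans-para-Sasakian value of `R(X,ξ)ξ` gives
`(c Ric(ξ,ξ) + α² + β²) φ² = (dα(ξ) - 2αβ) φ`, using `dβ(ξ) = 0`, which follows from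
`φ(grad α) = -(2n-1) grad β`. Since `φ` is an anti-isometry squaring to the identity on `ker η`,
both coefficients vanish, so `Ric(ξ,ξ) = -2n(α² + β²)`.
-/

section AlmostParacontact

variable {V : Type*} [AddCommGroup V] [Module ℝ V]

structure IsAlmostParacontactMetric (g : LinearMap.BilinForm ℝ V) (φ : V →ₗ[ℝ] V) (ξ : V)
    (η : V →ₗ[ℝ] ℝ) : Prop where
  symm : ∀ X Y, g X Y = g Y X
  φ_ξ : φ ξ = 0
  η_φ : ∀ X, η (φ X) = 0
  η_ξ : η ξ = 1
  φ_φ : ∀ X, φ (φ X) = X - η X • ξ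
  g_φ_φ : ∀ X Y, g (φ X) (φ Y) = -g X Y + η X * η Y

namespace IsAlmostParacontactMetric

variable {g : LinearMap.BilinForm ℝ V} {φ : V →ₗ[ℝ] V} {ξ : V} {η : V →ₗ[ℝ] ℝ}
  (h : IsAlmostParacontactMetric g φ ξ η)
include h

theorem g_ξ_ξ : g ξ ξ = 1 := by
  have := h.g_φ_φ ξ ξ
  simp only [h.φ_ξ, map_zero, h.η_ξ] at this
  linarith

theorem g_φ_ξ (X : V) : g (φ X) ξ = 0 := by
  have := h.g_φ_φ (φ X) ξ
  simp only [h.φ_ξ, map_zero, h.η_φ, zero_mul] at this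
  linarith

theorem g_ξ_right (X : V) : g X ξ = η X := by
  have := h.g_φ_ξ (φ X)
  simp only [h.φ_φ, map_sub, map_smul, LinearMap.sub_apply, LinearMap.smul_apply, smul_eq_mul,
    h.g_ξ_ξ] at this
  linarith

theorem g_ξ_left (X : V) : g ξ X = η X := (h.symm ξ X).trans (h.g_ξ_right X)

theorem exists_ker_η_g_ne_zero [FiniteDimensional ℝ V] (hg : g.Nondegenerate)
    (hV : 2 ≤ Module.finrank ℝ V) : ∃ Y W : V, η Y = 0 ∧ η W = 0 ∧ g Y W ≠ 0 := by
  obtain ⟨Y, hY, hY0⟩ : ∃ Y : V, η Y = 0 ∧ Y ≠ 0 := by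
    by_contra! hcon
    have hker : LinearMap.ker η = ⊥ := LinearMap.ker_eq_bot'.mpr hcon
    have hrank := LinearMap.finrank_range_add_finrank_ker η
    have hrange : Module.finrank ℝ (LinearMap.range η) ≤ 1 := by
      simpa using Submodule.finrank_le (LinearMap.range η)
    rw [hker, finrank_bot] at hrank
    omega
  obtain ⟨W, hW⟩ : ∃ W : V, g Y W ≠ 0 := by
    by_contra! hcon
    exact hY0 (hg.1 Y hcon)
  -- projecting `W` onto `ker η` along `ξ` does not change `g Y W`
  refine ⟨Y, W - η W • ξ, hY, by simp [h.η_ξ], ?_⟩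
  simpa [h.g_ξ_right, hY] using hW

/-- Evaluating `a φ² = b φ` gives `a g(Y, W) = b g(φY, W)` and `a g(Y, φW) = -b g(Y, W)`,
whence `(a² + b²) g(Y, W) = 0`. -/
theorem eq_zero_of_smul_φ_φ_eq {Y W : V} (hY : η Y = 0) (hW : η W = 0) (hYW : g Y W ≠ 0)
    {a b : ℝ} (hab : ∀ X, a • φ (φ X) = b • φ X) : a = 0 := by
  have h₁ := congrArg (fun v => g v (φ W)) (hab Y)
  have h₂ := congrArg (fun v => g v Y) (hab W)
  simp only [h.φ_φ, hY, hW, zero_smul, sub_zero, map_smul, LinearMap.smul_apply,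
    smul_eq_mul, h.g_φ_φ, mul_zero, add_zero] at h₁ h₂
  rw [h.symm W Y, h.symm (φ W) Y] at h₂
  have key : (a ^ 2 + b ^ 2) * g Y W = 0 := by linear_combination a * h₂ + b * h₁
  have hsq := (mul_eq_zero.mp key).resolve_right hYW
  nlinarith [sq_nonneg a, sq_nonneg b]

section ProjectivelyFlat

variable {R : V →ₗ[ℝ] V →ₗ[ℝ] V →ₗ[ℝ] V} {ρ : V → V → ℝ} {c : ℝ}
  (hR : ∀ X Y Z, R X Y Z = c • (ρ Y Z • X - ρ X Z • Y)) (hc : c ≠ 0)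
  (hskew : ∀ X Y Z W, g (R X Y Z) W = -g (R X Y W) Z)
include hR hc hskew

theorem ρ_apply_ξ (X : V) : ρ X ξ = ρ ξ ξ * η X := by
  have hzero : g (R X ξ ξ) ξ = 0 := by linarith [hskew X ξ ξ ξ]
  simp only [hR, map_smul, map_sub, LinearMap.smul_apply, LinearMap.sub_apply, smul_eq_mul,
    h.g_ξ_right, h.η_ξ, mul_eq_zero, hc, false_or] at hzero
  linarith

theorem R_apply_ξ_ξ (X : V) : R X ξ ξ = (c * ρ ξ ξ) • φ (φ X) := by
  rw [hR, h.ρ_apply_ξ hR hc hskew X, h.φ_φ]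
  module

theorem ρ_eq_of_skew (Y W : V) : ρ Y W = ρ ξ W * η Y + ρ ξ ξ * (g Y W - η Y * η W) := by
  have hξY := hskew ξ Y ξ W
  simp only [hR, map_smul, map_sub, LinearMap.smul_apply, LinearMap.sub_apply, smul_eq_mul,
    h.g_ξ_right, h.g_ξ_left, h.η_ξ] at hξY
  rw [h.ρ_apply_ξ hR hc hskew Y] at hξY
  have key : c * (ρ Y W - (ρ ξ W * η Y + ρ ξ ξ * (g Y W - η Y * η W))) = 0 := by
    linear_combination hξY
  simpa [hc, sub_eq_zero] using key

theorem ρ_eq_mul_g (hpair : ∀ X Y Z W, g (R X Y Z) W = g (R Z W X) Y)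
    {Y₀ W₀ : V} (hY₀ : η Y₀ = 0) (hW₀ : η W₀ = 0) (hYW₀ : g Y₀ W₀ ≠ 0) (Y W : V) :
    ρ Y W = ρ ξ ξ * g Y W := by
  have hρ := h.ρ_eq_of_skew hR hc hskew
  have hξ_left : ρ ξ W = ρ ξ ξ * η W := by
    have hY₀ξ := hpair Y₀ ξ W W₀
    simp only [hR, map_smul, map_sub, LinearMap.smul_apply, LinearMap.sub_apply, smul_eq_mul,
      h.g_ξ_right, h.g_ξ_left, hW₀, hρ W₀ Y₀, hY₀] at hY₀ξ
    rw [h.symm W₀ Y₀] at hY₀ξ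
    have key : c * g Y₀ W₀ * (ρ ξ W - ρ ξ ξ * η W) = 0 := by linear_combination hY₀ξ
    simpa [hc, hYW₀, sub_eq_zero] using key
  rw [hρ, hξ_left]
  ring

end ProjectivelyFlat

theorem R_apply_ξ_ξ_of_transParaSasakian {R : V →ₗ[ℝ] V →ₗ[ℝ] V →ₗ[ℝ] V} {α₀ β₀ : ℝ}
    {dα dβ : V →ₗ[ℝ] ℝ}
    (hTPS : ∀ X Y : V, R X Y ξ =
      -((α₀ ^ 2 + β₀ ^ 2) • (η Y • X - η X • Y))
      - (2 * α₀ * β₀) • (η Y • φ X - η X • φ Y)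
      - dα X • φ Y + dα Y • φ X + dβ Y • φ (φ X) - dβ X • φ (φ Y)) (X : V) :
    R X ξ ξ = (dβ ξ - (α₀ ^ 2 + β₀ ^ 2)) • φ (φ X) + (dα ξ - 2 * α₀ * β₀) • φ X := by
  rw [hTPS, h.φ_φ X, h.η_ξ, h.φ_ξ, map_zero]
  module

end IsAlmostParacontactMetric

end AlmostParacontact

theorem stmt_9_general
    (n : ℕ) (hn : 1 ≤ n)
    (V : Type*) [AddCommGroup V] [Module ℝ V] [FiniteDimensional ℝ V]
    (hdim : Module.finrank ℝ V = 2 * n + 1)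
    (g : LinearMap.BilinForm ℝ V)
    (hg_symm : ∀ X Y : V, g X Y = g Y X)
    (hg_nondeg : g.Nondegenerate)
    (φ : V →ₗ[ℝ] V) (ξ : V) (η : V →ₗ[ℝ] ℝ)
    (hφξ : φ ξ = 0) (hηφ : ∀ X : V, η (φ X) = 0)
    (hηξ : η ξ = 1) (hφ2 : ∀ X : V, φ (φ X) = X - η X • ξ)
    (hgφ : ∀ X Y : V, g (φ X) (φ Y) = - g X Y + η X * η Y)
    (R : V →ₗ[ℝ] V →ₗ[ℝ] V →ₗ[ℝ] V)
    (hR_a2 : ∀ X Y Z W : V, g (R X Y Z) W = - g (R X Y W) Z)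
    (hR_pair : ∀ X Y Z W : V, g (R X Y Z) W = g (R Z W X) Y)
    (α₀ β₀ : ℝ) (dα dβ : V →ₗ[ℝ] ℝ)
    (hTPS : ∀ X Y : V, R X Y ξ =
      -((α₀ ^ 2 + β₀ ^ 2) • (η Y • X - η X • Y))
      - (2 * α₀ * β₀) • (η Y • φ X - η X • φ Y)
      - dα X • φ Y + dα Y • φ X + dβ Y • φ (φ X) - dβ X • φ (φ Y))
    (A B : V) (hB : ∀ X : V, g B X = dβ X)
    (hgrad : φ A = -((2 * (n : ℝ) - 1) • B))
    (P : V → V → V → V)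
    (hP : ∀ X Y Z : V, P X Y Z = R X Y Z
      - (1 / (2 * (n : ℝ))) • (Ric R Y Z • X - Ric R X Z • Y))
    (hflat : ∀ X Y Z : V, P X Y Z = 0)
    :
    ∀ X Y : V, Ric R X Y = -(2 * (n : ℝ) * (α₀ ^ 2 + β₀ ^ 2)) * g X Y := by
  have h : IsAlmostParacontactMetric g φ ξ η := ⟨hg_symm, hφξ, hηφ, hηξ, hφ2, hgφ⟩
  have hn' : (1 : ℝ) ≤ n := by exact_mod_cast hn
  have hc : 1 / (2 * (n : ℝ)) ≠ 0 := by positivity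
  have hR : ∀ X Y Z, R X Y Z = (1 / (2 * (n : ℝ))) • (Ric R Y Z • X - Ric R X Z • Y) :=
    fun X Y Z => sub_eq_zero.mp ((hP X Y Z).symm.trans (hflat X Y Z))
  obtain ⟨Y₀, W₀, hY₀, hW₀, hYW₀⟩ := h.exists_ker_η_g_ne_zero hg_nondeg (by omega)
  have hdβξ : dβ ξ = 0 := by
    have hηB := congrArg η hgrad
    rw [hηφ, map_neg, map_smul, smul_eq_mul, zero_eq_neg, mul_eq_zero] at hηB
    rw [← hB, h.g_ξ_right, hηB.resolve_left (by linarith)]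
  have hcoeff : 1 / (2 * (n : ℝ)) * Ric R ξ ξ + (α₀ ^ 2 + β₀ ^ 2) = 0 := by
    refine h.eq_zero_of_smul_φ_φ_eq hY₀ hW₀ hYW₀ (b := dα ξ - 2 * α₀ * β₀) fun X => ?_
    have hRξξ := (h.R_apply_ξ_ξ hR hc hR_a2 X).symm.trans
      (h.R_apply_ξ_ξ_of_transParaSasakian hTPS X)
    rw [hdβξ] at hRξξ
    linear_combination (norm := module) hRξξ
  intro X Y
  rw [h.ρ_eq_mul_g hR hc hR_a2 hR_pair hY₀ hW₀ hYW₀]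
  field_simp at hcoeff
  linear_combination g X Y * hcoeff

theorem stmt_9
    (n : ℕ) (hn : 1 ≤ n)
    (V : Type*) [AddCommGroup V] [Module ℝ V] [FiniteDimensional ℝ V]
    (hdim : Module.finrank ℝ V = 2 * n + 1)
    (g : LinearMap.BilinForm ℝ V)
    (hg_symm : ∀ X Y : V, g X Y = g Y X)
    (hg_nondeg : g.Nondegenerate)
    (φ : V →ₗ[ℝ] V) (ξ : V) (η : V →ₗ[ℝ] ℝ)
    (hφξ : φ ξ = 0) (hηφ : ∀ X : V, η (φ X) = 0)
    (hηξ : η ξ = 1) (hφ2 : ∀ X : V, φ (φ X) = X - η X • ξ)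
    (hgφ : ∀ X Y : V, g (φ X) (φ Y) = - g X Y + η X * η Y)
    (R : V →ₗ[ℝ] V →ₗ[ℝ] V →ₗ[ℝ] V)
    (hR_a1 : ∀ X Y Z W : V, g (R X Y Z) W = - g (R Y X Z) W)
    (hR_a2 : ∀ X Y Z W : V, g (R X Y Z) W = - g (R X Y W) Z)
    (hR_pair : ∀ X Y Z W : V, g (R X Y Z) W = g (R Z W X) Y)
    (α₀ β₀ : ℝ) (dα dβ : V →ₗ[ℝ] ℝ)
    (hTPS : ∀ X Y : V, R X Y ξ =
      -((α₀ ^ 2 + β₀ ^ 2) • (η Y • X - η X • Y))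
      - (2 * α₀ * β₀) • (η Y • φ X - η X • φ Y)
      - dα X • φ Y + dα Y • φ X + dβ Y • φ (φ X) - dβ X • φ (φ Y))
    (Qop : V →ₗ[ℝ] V) (hQ : ∀ X Y : V, g (Qop X) Y = Ric R X Y)
    (scal : ℝ) (hscal : scal = LinearMap.trace ℝ V Qop)
    (A B : V) (hA : ∀ X : V, g A X = dα X) (hB : ∀ X : V, g B X = dβ X)
    (hgrad : φ A = -((2 * (n : ℝ) - 1) • B))
    (P : V → V → V → V)
    (hP : ∀ X Y Z : V, P X Y Z = R X Y Z
      - (1 / (2 * (n : ℝ))) • (Ric R Y Z • X - Ric R X Z • Y))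
    (hflat : ∀ X Y Z : V, P X Y Z = 0)
    :
    ∀ X Y : V, Ric R X Y = -(2 * (n : ℝ) * (α₀ ^ 2 + β₀ ^ 2)) * g X Y :=
  stmt_9_general n hn V hdim g hg_symm hg_nondeg φ ξ η hφξ hηφ hηξ hφ2 hgφ R hR_a2 hR_pair α₀ β₀ dα
    dβ hTPS A B hB hgrad P hP hflat
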